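/- Let s₁, d₁, s₂, d₂ be nonnegative integers with s₁ + d₁ = s₂ + d₂ ≥ 2 and {s₁, d₁} ≠ {s₂, d₂}. Then there exists a finite nonempty set A of nonnegative integers such that |s₁A - d₁A| > |s₂A - d₂A|. -/

import Mathlib

open Finset Pointwise

/-- `itSum k A` is the k-fold sumset A + A + ⋯ + A (with `itSum 0 A = {0}`). -/
def itSum : ℕ → Finset ℤ → Finset ℤ
  | 0, _ => {0}
  | n+1, A => A + itSum n A

/-- `gDiff s d A = sA - dA`. -/
def gDiff (s d : ℕ) (A : Finset ℤ) : Finset ℤ := itSum s A - itSum d A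

/-!
Fix `K > 0`, `N = 3K` and `G ⊆ [0, K)` with `0 ∈ G`, and let `A = {0} ∪ [K, 2K] ∪ (N - G)`.
Because `A` contains the full interval `[K, 2K]` and both `0` and `N`, the set `sA - dA` is the
whole interval `[K - dN, sN - K]` together with two fringes of width `K`: `(dG ∩ [0, K)) - dN` below
and `sN - (sG ∩ [0, K))` above. Hence `|sA - dA| = (s + d)N - 2K + 1 + f(s) + f(d)` with
`f(k) = |kG ∩ [0, K)|`, and since `s + d` is the same for both pairs it suffices to find `G` with
`f(s₂) + f(d₂) < f(s₁) + f(d₁)`.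

Order each pair so that `d ≤ s`. If `s₁ < s₂`, take `G = {0, 1}` and `K = s₁ + 1`: then
`f(k) = min(k, s₁) + 1` is capped at `s₁ + 1`, which penalises the more spread pair. If `s₁ > s₂`,
take `G = {0, 1, m}` with `m = s₁ + 1` and `K = s₁m + 1`: for `k ≤ s₁` all sums `i + jm` with
`i + j ≤ k` are distinct and below `K`, so `f(k) = (k + 1)(k + 2)/2` is strictly convex, which
favours the more spread pair.
-/

theorem itSum_eq_nsmul (k : ℕ) (A : Finset ℤ) : itSum k A = k • A := by
  induction k with
  | zero => rfl
  | succ k ih => rw [itSum, ih, succ_nsmul']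

theorem gDiff_eq_nsmul_sub_nsmul (s d : ℕ) (A : Finset ℤ) : gDiff s d A = s • A - d • A := by
  rw [gDiff, itSum_eq_nsmul, itSum_eq_nsmul]

theorem card_gDiff_comm (s d : ℕ) (A : Finset ℤ) : #(gDiff d s A) = #(gDiff s d A) := by
  rw [gDiff, gDiff, ← neg_sub, card_neg]

theorem card_gDiff_max_min (s d : ℕ) (A : Finset ℤ) :
    #(gDiff (max s d) (min s d) A) = #(gDiff s d A) := by
  rcases le_total d s with h | h
  · rw [max_eq_left h, min_eq_right h]
  · rw [max_eq_right h, min_eq_left h, card_gDiff_comm]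

section Sumsets

variable {α : Type*} [DecidableEq α] {A B : Finset α} {k : ℕ} {x : α}

theorem nsmul_sub_mem_nsmul [AddCommGroup α] {c : α} (hAB : ∀ a ∈ A, c - a ∈ B)
    (hx : x ∈ k • A) : k • c - x ∈ k • B := by
  induction k generalizing x with
  | zero => simpa using hx
  | succ k ih =>
    obtain ⟨y, hy, a, ha, rfl⟩ := mem_add.1 (succ_nsmul A k ▸ hx)
    rw [succ_nsmul, succ_nsmul, add_sub_add_comm]
    exact add_mem_add (ih hy) (hAB a ha)

theorem nsmul_subset_Icc [AddCommMonoid α] [PartialOrder α] [IsOrderedAddMonoid α]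
    [LocallyFiniteOrder α] {a b : α} (h : A ⊆ Icc a b) : k • A ⊆ Icc (k • a) (k • b) := by
  induction k with
  | zero => simp [← singleton_zero]
  | succ k ih =>
    rw [succ_nsmul, succ_nsmul, succ_nsmul]
    exact (add_subset_add ih h).trans (Icc_add_Icc_subset _ _ _ _)

theorem nonneg_of_mem_nsmul [AddCommMonoid α] [PartialOrder α] [IsOrderedAddMonoid α]
    (hA : ∀ a ∈ A, 0 ≤ a) (hx : x ∈ k • A) : 0 ≤ x := by
  induction k generalizing x with
  | zero => simp_all
  | succ k ih =>
    obtain ⟨y, hy, a, ha, rfl⟩ := mem_add.1 (succ_nsmul A k ▸ hx)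
    exact add_nonneg (ih hy) (hA a ha)

theorem mem_nsmul_of_lt [AddCommMonoid α] [LinearOrder α] [IsOrderedAddMonoid α] {c : α}
    (hA : ∀ a ∈ A, 0 ≤ a) (hAB : ∀ a ∈ A, a < c → a ∈ B) (hx : x ∈ k • A) (hxc : x < c) :
    x ∈ k • B := by
  induction k generalizing x with
  | zero => simpa using hx
  | succ k ih =>
    obtain ⟨y, hy, a, ha, rfl⟩ := mem_add.1 (succ_nsmul A k ▸ hx)
    have hy0 := nonneg_of_mem_nsmul hA hy
    have ha0 := hA a ha
    rw [succ_nsmul]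
    exact add_mem_add (ih hy ((le_add_of_nonneg_right ha0).trans_lt hxc))
      (hAB a ha ((le_add_of_nonneg_left hy0).trans_lt hxc))

end Sumsets

noncomputable def fringedSet (K : ℤ) (G : Finset ℤ) : Finset ℤ :=
  insert 0 (Icc K (2 * K) ∪ G.image (3 * K - ·))

section FringedSet

variable {K a : ℤ} {G : Finset ℤ}

theorem mem_fringedSet : a ∈ fringedSet K G ↔ a = 0 ∨ K ≤ a ∧ a ≤ 2 * K ∨ 3 * K - a ∈ G := by
  simp only [fringedSet, mem_insert, mem_union, mem_Icc, mem_image]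
  constructor
  · rintro (h | h | ⟨g, hg, rfl⟩)
    · exact .inl h
    · exact .inr (.inl h)
    · exact .inr (.inr (by simpa using hg))
  · rintro (h | h | h)
    · exact .inl h
    · exact .inr (.inl h)
    · exact .inr (.inr ⟨_, h, by ring⟩)

theorem zero_mem_fringedSet : (0 : ℤ) ∈ fringedSet K G := mem_insert_self _ _

theorem sub_mem_fringedSet {g : ℤ} (hg : g ∈ G) : 3 * K - g ∈ fringedSet K G :=
  mem_fringedSet.2 (.inr (.inr (by simpa using hg)))

theorem fringedSet_mono {G' : Finset ℤ} (h : G ⊆ G') : fringedSet K G ⊆ fringedSet K G' := by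
  intro a
  simp only [mem_fringedSet]
  exact Or.imp_right (Or.imp_right (@h _))

theorem sub_mem_fringedSet_zero (ha : a ∈ fringedSet K {0}) : 3 * K - a ∈ fringedSet K {0} := by
  simp only [mem_fringedSet, mem_singleton] at ha ⊢
  omega

theorem fringedSet_subset_Icc (hK : 0 ≤ K) (hG : G ⊆ Ico 0 K) :
    fringedSet K G ⊆ Icc 0 (3 * K) := by
  intro a ha
  rw [mem_Icc]
  rcases mem_fringedSet.1 ha with rfl | ha | ha
  · omega
  · omega
  · have := mem_Ico.1 (hG ha)
    omega

theorem eq_zero_of_mem_fringedSet_of_lt (hG : G ⊆ Ico 0 K) (ha : a ∈ fringedSet K G)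
    (haK : a < K) : a = 0 := by
  rcases mem_fringedSet.1 ha with rfl | ha | ha
  · rfl
  · omega
  · have := mem_Ico.1 (hG ha)
    omega

theorem Icc_subset_nsmul_fringedSet_zero (hK : 0 ≤ K) {h : ℕ} (hh : 1 ≤ h) :
    Icc K (h * (3 * K) - K) ⊆ h • fringedSet K {0} := by
  induction h, hh using Nat.le_induction with
  | base =>
    intro z hz
    rw [one_nsmul, mem_fringedSet]
    simp only [Nat.cast_one, mem_Icc] at hz
    omega
  | succ h hh ih =>
    intro z hz
    have hN : 3 * K ≤ h * (3 * K) := le_mul_of_one_le_left (by omega) (by exact_mod_cast hh)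
    simp only [Nat.cast_succ, mem_Icc] at hz
    have hmem {u v : ℤ} (hu : K ≤ u ∧ u ≤ h * (3 * K) - K) (hv : v ∈ fringedSet K {0}) :
        u + v ∈ (h + 1) • fringedSet K {0} :=
      succ_nsmul (fringedSet K {0}) h ▸ add_mem_add (ih (mem_Icc.2 hu)) hv
    -- split off a last summand `0`, `3K`, or one in `[K, 2K]`
    rcases le_or_gt z (h * (3 * K) - K) with h₁ | h₁
    · simpa using hmem (v := 0) ⟨hz.1, h₁⟩ (by simp [mem_fringedSet])
    rcases lt_or_ge (h * (3 * K) + K) z with h₂ | h₂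
    · simpa using hmem (u := z - 3 * K) (v := 3 * K) (by constructor <;> linarith)
        (by simp [mem_fringedSet])
    · set v := max K (z - h * (3 * K) + K)
      simpa using hmem (u := z - v) (v := v) (by omega) (by rw [mem_fringedSet]; omega)

theorem Icc_subset_nsmul_sub_nsmul_fringedSet (hK : 0 ≤ K) (h0 : 0 ∈ G) {s d : ℕ}
    (hsd : s + d ≠ 0) :
    Icc (K - d * (3 * K)) (s * (3 * K) - K) ⊆ s • fringedSet K G - d • fringedSet K G := by
  intro x hx
  rw [mem_Icc] at hx
  -- write `x + 3dK` as a sum of `s + d` elements of `fringedSet K {0}`, and reflect the last `d`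
  have hcore {k : ℕ} : k • fringedSet K {0} ⊆ k • fringedSet K G :=
    nsmul_subset_nsmul_left (fringedSet_mono (singleton_subset_iff.2 h0))
  have hz : x + d * (3 * K) ∈ (s + d) • fringedSet K {0} :=
    Icc_subset_nsmul_fringedSet_zero hK (Nat.one_le_iff_ne_zero.2 hsd)
      (mem_Icc.2 ⟨by omega, by push_cast; linarith⟩)
  obtain ⟨u, hu, v, hv, huv⟩ := mem_add.1 (add_nsmul (fringedSet K {0}) s d ▸ hz)
  have hv' := nsmul_sub_mem_nsmul (fun a ha => sub_mem_fringedSet_zero ha) hv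
  exact mem_sub.2 ⟨u, hcore hu, d * (3 * K) - v, hcore (by simpa using hv'), by omega⟩

variable {x : ℤ} {k : ℕ}

theorem eq_zero_of_mem_nsmul_fringedSet_of_lt (hK : 0 ≤ K) (hG : G ⊆ Ico 0 K)
    (hx : x ∈ k • fringedSet K G) (hxK : x < K) : x = 0 := by
  have hx0 : x ∈ k • ({0} : Finset ℤ) :=
    mem_nsmul_of_lt (fun a ha => (mem_Icc.1 (fringedSet_subset_Icc hK hG ha)).1)
      (fun a ha haK => mem_singleton.2 (eq_zero_of_mem_fringedSet_of_lt hG ha haK)) hx hxK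
  simpa using hx0

theorem sub_mem_nsmul_of_mem_nsmul_fringedSet (hK : 0 ≤ K) (hG : G ⊆ Ico 0 K)
    (hx : x ∈ k • fringedSet K G) (hxK : k * (3 * K) - x < K) : k * (3 * K) - x ∈ k • G := by
  have hrefl : k * (3 * K) - x ∈ k • (fringedSet K G).image (3 * K - ·) := by
    simpa using nsmul_sub_mem_nsmul (fun a ha => mem_image_of_mem _ ha) hx
  refine mem_nsmul_of_lt ?_ ?_ hrefl hxK
  · intro b hb
    obtain ⟨a, ha, rfl⟩ := mem_image.1 hb
    linarith [(mem_Icc.1 (fringedSet_subset_Icc hK hG ha)).2]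
  · intro b hb haK
    obtain ⟨a, ha, rfl⟩ := mem_image.1 hb
    rcases mem_fringedSet.1 ha with rfl | ha | ha
    · omega
    · omega
    · exact ha

theorem gDiff_fringedSet (hG : G ⊆ Ico 0 K) (h0 : 0 ∈ G) {s d : ℕ} (hsd : s + d ≠ 0) :
    gDiff s d (fringedSet K G) =
      (d • G ∩ Ico 0 K).image (· - d * (3 * K)) ∪ Icc (K - d * (3 * K)) (s * (3 * K) - K) ∪
        (s • G ∩ Ico 0 K).image (s * (3 * K) - ·) := by
  have hK : 0 ≤ K := by have := mem_Ico.1 (hG h0); omega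
  have hbounds {k : ℕ} {p : ℤ} (hp : p ∈ k • fringedSet K G) : 0 ≤ p ∧ p ≤ k * (3 * K) := by
    simpa using nsmul_subset_Icc (fringedSet_subset_Icc hK hG) hp
  ext x
  simp only [gDiff_eq_nsmul_sub_nsmul, mem_sub, mem_union, mem_image, mem_inter, mem_Ico, mem_Icc]
  constructor
  · rintro ⟨p, hp, q, hq, rfl⟩
    have hp' := hbounds hp
    have hq' := hbounds hq
    by_cases hlow : p - q < K - d * (3 * K)
    · have := eq_zero_of_mem_nsmul_fringedSet_of_lt hK hG hp (by omega)
      have := sub_mem_nsmul_of_mem_nsmul_fringedSet hK hG hq (by omega)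
      exact .inl (.inl ⟨_, ⟨this, by omega, by omega⟩, by omega⟩)
    by_cases hhigh : s * (3 * K) - K < p - q
    · have := eq_zero_of_mem_nsmul_fringedSet_of_lt hK hG hq (by omega)
      have := sub_mem_nsmul_of_mem_nsmul_fringedSet hK hG hp (by omega)
      exact .inr ⟨_, ⟨this, by omega, by omega⟩, by omega⟩
    exact .inl (.inr ⟨by omega, by omega⟩)
  · have hsub {k : ℕ} {c : ℤ} (hc : c ∈ k • G) : k * (3 * K) - c ∈ k • fringedSet K G := by
      simpa using nsmul_sub_mem_nsmul (fun g hg => sub_mem_fringedSet hg) hc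
    rintro ((⟨c, ⟨hc, -⟩, rfl⟩ | hx) | ⟨c, ⟨hc, -⟩, rfl⟩)
    · exact ⟨0, zero_mem_nsmul zero_mem_fringedSet, _, hsub hc, by ring⟩
    · exact mem_sub.1 (Icc_subset_nsmul_sub_nsmul_fringedSet hK h0 hsd (mem_Icc.2 hx))
    · exact ⟨_, hsub hc, 0, zero_mem_nsmul zero_mem_fringedSet, by ring⟩

theorem card_gDiff_fringedSet (hG : G ⊆ Ico 0 K) (h0 : 0 ∈ G) {s d : ℕ}
    (hsd : s + d ≠ 0) :
    (#(gDiff s d (fringedSet K G)) : ℤ) =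
      #(d • G ∩ Ico 0 K) + ((s + d : ℕ) * (3 * K) - 2 * K + 1) + #(s • G ∩ Ico 0 K) := by
  have hK : 0 < K := (mem_Ico.1 (hG h0)).2
  have hN : 3 * K ≤ (s + d) * (3 * K) :=
    le_mul_of_one_le_left (by omega) (by exact_mod_cast Nat.one_le_iff_ne_zero.2 hsd)
  rw [gDiff_fringedSet hG h0 hsd, card_union_of_disjoint, card_union_of_disjoint,
    card_image_of_injective _ sub_left_injective, card_image_of_injective _ sub_right_injective,
    Int.card_Icc]
  · push_cast
    rw [Int.toNat_of_nonneg (by linarith)]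
    ring
  · rw [disjoint_left]
    rintro _ hlow hmid
    obtain ⟨c, hc, rfl⟩ := mem_image.1 hlow
    have := mem_Ico.1 (mem_inter.1 hc).2
    have := mem_Icc.1 hmid
    omega
  · rw [disjoint_left]
    rintro _ hlm hhigh
    obtain ⟨c, hc, rfl⟩ := mem_image.1 hhigh
    have := mem_Ico.1 (mem_inter.1 hc).2
    rcases mem_union.1 hlm with hlow | hmid
    · obtain ⟨c', hc', hcc'⟩ := mem_image.1 hlow
      have := mem_Ico.1 (mem_inter.1 hc').2
      linarith
    · have := mem_Icc.1 hmid
      omega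

end FringedSet

theorem nsmul_pair_eq_Icc (k : ℕ) : k • ({0, 1} : Finset ℤ) = Icc 0 (k : ℤ) := by
  induction k with
  | zero => simp [← singleton_zero]
  | succ k ih =>
    ext x
    simp only [succ_nsmul, ih, mem_add, mem_Icc, mem_insert, mem_singleton]
    constructor
    · rintro ⟨y, hy, a, ha, rfl⟩
      omega
    · intro hx
      rcases le_or_gt x k with h | h
      · exact ⟨x, by omega, 0, .inl rfl, by ring⟩
      · exact ⟨x - 1, by omega, 1, .inr rfl, by ring⟩

/-- A sum of `i` ones and `j` copies of `m` lies in the block `[jm, jm + i]`. -/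
theorem nsmul_triple_eq_biUnion (k : ℕ) (m : ℤ) :
    k • ({0, 1, m} : Finset ℤ) =
      (antidiagonal k).biUnion fun p => Icc (p.2 * m) (p.2 * m + p.1) := by
  induction k with
  | zero => simp [← singleton_zero]
  | succ k ih =>
    ext x
    simp only [succ_nsmul, ih, mem_add, mem_biUnion, HasAntidiagonal.mem_antidiagonal, mem_Icc,
      mem_insert, mem_singleton, Prod.exists]
    constructor
    · rintro ⟨y, ⟨i, j, hij, hy⟩, a, ha, rfl⟩
      rcases ha with rfl | rfl | rfl
      · exact ⟨i + 1, j, by omega, by push_cast; omega⟩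
      · exact ⟨i + 1, j, by omega, by push_cast; omega⟩
      · exact ⟨i, j + 1, by omega, by push_cast; constructor <;> linarith⟩
    · rintro ⟨i, j, hij, hx⟩
      rcases lt_or_eq_of_le hx.1 with hlt | rfl
      · obtain ⟨i, rfl⟩ : ∃ i', i = i' + 1 := ⟨i - 1, by omega⟩
        exact ⟨x - 1, ⟨i, j, by omega, by omega⟩, 1, .inr (.inl rfl), by ring⟩
      · rcases j with _ | j
        · exact ⟨0, ⟨k, 0, by omega, by simp⟩, 0, .inl rfl, by simp⟩
        · exact ⟨j * m, ⟨i, j, by omega, by simp⟩, m, .inr (.inr rfl), by push_cast; ring⟩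

theorem card_nsmul_triple_of_lt {k : ℕ} {m : ℤ} (hm : k < m) :
    2 * #(k • ({0, 1, m} : Finset ℤ)) = (k + 1) * (k + 2) := by
  rw [nsmul_triple_eq_biUnion, card_biUnion]
  · have hcard (p : ℕ × ℕ) : #(Icc (p.2 * m) (p.2 * m + p.1)) = p.1 + 1 := by
      rw [Int.card_Icc]
      omega
    calc 2 * ∑ p ∈ antidiagonal k, #(Icc (p.2 * m) (p.2 * m + p.1))
        = 2 * ∑ i ∈ range (k + 1), (i + 1) := by
          simp_rw [hcard, Nat.sum_antidiagonal_eq_sum_range_succ_mk]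
      _ = (∑ i ∈ range (k + 2), i) * 2 := by rw [sum_range_succ' (fun i => i)]; ring
      _ = (k + 1) * (k + 2) := by rw [sum_range_id_mul_two]; simp [mul_comm]
  · intro p hp q hq hpq
    simp only [mem_coe, HasAntidiagonal.mem_antidiagonal] at hp hq
    have hlt {a b : ℕ × ℕ} (ha : a.1 + a.2 = k) (hab : a.2 < b.2) : a.2 * m + a.1 < b.2 * m := by
      have : ((a.2 : ℤ) + 1) * m ≤ b.2 * m :=
        mul_le_mul_of_nonneg_right (by exact_mod_cast hab) (by omega)
      have : (a.1 : ℤ) ≤ k := by exact_mod_cast (show a.1 ≤ k by omega)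
      linarith
    rw [Function.onFun, disjoint_left]
    intro x hxp hxq
    rw [mem_Icc] at hxp hxq
    rcases lt_trichotomy p.2 q.2 with h | h | h
    · linarith [hlt hp h]
    · exact hpq (Prod.ext (by omega) h)
    · linarith [hlt hq h]

theorem exists_card_gDiff_lt_of_card_inter_lt {K : ℤ} {G : Finset ℤ} (hG : G ⊆ Ico 0 K)
    (h0 : 0 ∈ G) {s₁ d₁ s₂ d₂ : ℕ} (hsum : s₁ + d₁ = s₂ + d₂) (hpos : s₁ + d₁ ≠ 0)
    (hlt : #(s₂ • G ∩ Ico 0 K) + #(d₂ • G ∩ Ico 0 K) < #(s₁ • G ∩ Ico 0 K) + #(d₁ • G ∩ Ico 0 K)) :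
    ∃ A : Finset ℤ, A.Nonempty ∧ (∀ a ∈ A, 0 ≤ a) ∧ #(gDiff s₂ d₂ A) < #(gDiff s₁ d₁ A) := by
  have hK : 0 ≤ K := (mem_Ico.1 (hG h0)).1.trans (mem_Ico.1 (hG h0)).2.le
  refine ⟨fringedSet K G, ⟨0, zero_mem_fringedSet⟩,
    fun a ha => (mem_Icc.1 (fringedSet_subset_Icc hK hG ha)).1, ?_⟩
  have h₁ := card_gDiff_fringedSet hG h0 hpos
  have h₂ := card_gDiff_fringedSet hG h0 (s := s₂) (d := d₂) (hsum ▸ hpos)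
  rw [← hsum] at h₂
  zify at hlt ⊢
  linarith

theorem card_nsmul_pair_inter_Ico (k n : ℕ) :
    #(k • ({0, 1} : Finset ℤ) ∩ Ico 0 (n + 1 : ℤ)) = min k n + 1 := by
  have : Icc 0 (k : ℤ) ∩ Ico 0 (n + 1 : ℤ) = Icc 0 ((min k n : ℕ) : ℤ) := by
    ext x
    simp only [mem_inter, mem_Icc, mem_Ico]
    omega
  rw [nsmul_pair_eq_Icc, this, Int.card_Icc]
  omega

theorem exists_card_gDiff_lt_of_lt {s₁ d₁ s₂ d₂ : ℕ} (hsum : s₁ + d₁ = s₂ + d₂) (hd₁ : d₁ ≤ s₁)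
    (hs : s₁ < s₂) :
    ∃ A : Finset ℤ, A.Nonempty ∧ (∀ a ∈ A, 0 ≤ a) ∧ #(gDiff s₂ d₂ A) < #(gDiff s₁ d₁ A) := by
  have hG : ({0, 1} : Finset ℤ) ⊆ Ico 0 (s₁ + 1 : ℤ) := by
    intro x hx
    simp only [mem_insert, mem_singleton] at hx
    rw [mem_Ico]
    omega
  refine exists_card_gDiff_lt_of_card_inter_lt hG (by simp) hsum (by omega) ?_
  simp only [card_nsmul_pair_inter_Ico]
  omega

theorem exists_card_gDiff_lt_of_gt {s₁ d₁ s₂ d₂ : ℕ} (hsum : s₁ + d₁ = s₂ + d₂) (hd₂ : d₂ ≤ s₂)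
    (hs : s₂ < s₁) :
    ∃ A : Finset ℤ, A.Nonempty ∧ (∀ a ∈ A, 0 ≤ a) ∧ #(gDiff s₂ d₂ A) < #(gDiff s₁ d₁ A) := by
  set m : ℤ := s₁ + 1
  set K : ℤ := s₁ * m + 1
  have hmK : m < K := by nlinarith
  have hG : ({0, 1, m} : Finset ℤ) ⊆ Ico 0 K := by
    intro x hx
    simp only [mem_insert, mem_singleton] at hx
    rw [mem_Ico]
    omega
  have hcount {k : ℕ} (hk : k ≤ s₁) :
      2 * #(k • ({0, 1, m} : Finset ℤ) ∩ Ico 0 K) = (k + 1) * (k + 2) := by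
    have hsub : k • ({0, 1, m} : Finset ℤ) ⊆ Ico 0 K := by
      refine (nsmul_subset_Icc (a := 0) (b := m) ?_).trans ?_
      · intro x hx
        simp only [mem_insert, mem_singleton] at hx
        rw [mem_Icc]
        omega
      · intro x hx
        simp only [nsmul_eq_mul, mul_zero, mem_Icc, mem_Ico] at hx ⊢
        have : (k : ℤ) * m ≤ s₁ * m := mul_le_mul_of_nonneg_right (by exact_mod_cast hk) (by omega)
        omega
    rw [inter_eq_left.2 hsub, card_nsmul_triple_of_lt (by omega)]
  refine exists_card_gDiff_lt_of_card_inter_lt hG (by simp) hsum (by omega) ?_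
  have := hcount le_rfl
  have := hcount (k := s₂) (by omega)
  have := hcount (k := d₁) (by omega)
  have := hcount (k := d₂) (by omega)
  nlinarith

theorem stmt_8_general (s₁ d₁ s₂ d₂ : ℕ)
    (hsum : s₁ + d₁ = s₂ + d₂)
    (hne : ¬ ((s₁ = s₂ ∧ d₁ = d₂) ∨ (s₁ = d₂ ∧ d₁ = s₂))) :
    ∃ A : Finset ℤ, A.Nonempty ∧ (∀ a ∈ A, 0 ≤ a) ∧
      (gDiff s₁ d₁ A).card > (gDiff s₂ d₂ A).card := by
  have hsum' : max s₁ d₁ + min s₁ d₁ = max s₂ d₂ + min s₂ d₂ := by omega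
  obtain ⟨A, hA, hA0, hlt⟩ : ∃ A : Finset ℤ, A.Nonempty ∧ (∀ a ∈ A, 0 ≤ a) ∧
      #(gDiff (max s₂ d₂) (min s₂ d₂) A) < #(gDiff (max s₁ d₁) (min s₁ d₁) A) := by
    rcases lt_or_gt_of_ne (show max s₁ d₁ ≠ max s₂ d₂ by omega) with h | h
    · exact exists_card_gDiff_lt_of_lt hsum' min_le_max h
    · exact exists_card_gDiff_lt_of_gt hsum' min_le_max h
  exact ⟨A, hA, hA0, by simpa only [card_gDiff_max_min] using hlt⟩

theorem stmt_8 (s₁ d₁ s₂ d₂ : ℕ)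
    (hsum : s₁ + d₁ = s₂ + d₂) (h2 : 2 ≤ s₁ + d₁)
    (hne : ¬ ((s₁ = s₂ ∧ d₁ = d₂) ∨ (s₁ = d₂ ∧ d₁ = s₂))) :
    ∃ A : Finset ℤ, A.Nonempty ∧ (∀ a ∈ A, 0 ≤ a) ∧
      (gDiff s₁ d₁ A).card > (gDiff s₂ d₂ A).card :=
  stmt_8_general s₁ d₁ s₂ d₂ hsum hne
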